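/- arXiv:1104.1961 — 4 statements merged into one kernel-verified Lean document; each statement's English description precedes it below -/
import Mathlib

section
/- For every nonempty finite subset E ⊆ ℕ (of positive integers), there exist a finite abelian group G, an automorphism v of G, and a subgroup H ≤ G such that E = {#(O(h) ∩ H) : h ∈ H, h ≠ 0}, where O(h) denotes the v-orbit of h. -/
/-- An algebraic realization of a set `E ⊆ ℕ` : a finite abelian group `G`,
an automorphism `v` of `G` and a subgroup `H ≤ G` such that
`E = {#(O(h) ∩ H) : 0 ≠ h ∈ H}`, where `O(h) = {vⁱ(h) : i ∈ ℤ}` is the `v`-orbit. -/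
structure AlgRealization (E : Set ℕ) where
  G : Type
  [grp : AddCommGroup G]
  [fin : Fintype G]
  v : AddAut G
  H : AddSubgroup G
  spec : E = {n : ℕ | ∃ h : G, h ∈ H ∧ h ≠ 0 ∧
      Nat.card ((Set.range fun i : ℤ => (i • v) h) ∩ (H : Set G) : Set G) = n}

/-!
For each `n ∈ E` take a copy of `K²` on which `v` acts as `diag(ζ, ζ ^ (n + 1))`, where `ζ` is
a primitive root of unity of order `D n * n` and `D n = prodBelow E n` is the product of the
elements of `E` below `n`; let `H` be the diagonal. For `h = (x, x)` with `x ≠ 0`, `vⁱ h ∈ H`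
iff `ζ ^ (n * i) = 1` iff `D n ∣ i`, while the orbit of `h` has period `D n * n`, so exactly `n`
points of the orbit lie in `H`. On the product over `n ∈ E`, the largest `n` in the support of
`h` governs both divisibility conditions, because `D j * j ∣ D n` for `j < n`; hence
`#(O(h) ∩ H)` is that largest `n`. All these roots of unity exist in `ZMod p` for a prime
`p ≡ 1 [MOD ∏ E]`.
-/

open Finset

lemma Nat.card_range_inter_eq_of_dvd_iff {α : Type*} {f : ℤ → α} {S : Set α} {d m : ℕ}
    (hd : 0 < d) (hm : 0 < m) (hf : ∀ i i', f i = f i' ↔ ((d * m : ℕ) : ℤ) ∣ i - i')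
    (hS : ∀ i, f i ∈ S ↔ (d : ℤ) ∣ i) :
    Nat.card ↥(Set.range f ∩ S) = m := by
  have hm' : (0 : ℤ) < m := by exact_mod_cast hm
  have hrange : Set.range f ∩ S = Set.range fun t : Fin m => f (d * (t : ℕ)) := by
    ext x
    constructor
    · rintro ⟨⟨i, rfl⟩, hi⟩
      obtain ⟨q, rfl⟩ := (hS i).1 hi
      have hq := Int.emod_nonneg q hm'.ne'
      refine ⟨⟨(q % m).toNat, by have := Int.emod_lt_of_pos q hm'; omega⟩, (hf _ _).2 ?_⟩
      refine ⟨-(q / m), ?_⟩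
      rw [Int.toNat_of_nonneg hq, Int.emod_def]
      push_cast
      ring
    · rintro ⟨t, rfl⟩
      exact ⟨⟨_, rfl⟩, (hS _).2 (dvd_mul_right _ _)⟩
  have hinj : Function.Injective fun t : Fin m => f (d * (t : ℕ)) := by
    intro t t' htt'
    have hdvd : (m : ℤ) ∣ (t : ℕ) - (t' : ℕ) := by
      have := (hf _ _).1 htt'
      rw [← mul_sub, Nat.cast_mul] at this
      exact (mul_dvd_mul_iff_left (by exact_mod_cast hd.ne')).1 this
    have := Int.eq_zero_of_abs_lt_dvd hdvd (by rw [abs_lt]; omega)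
    exact Fin.ext (by omega)
  rw [hrange, Nat.card_range_of_injective hinj, Nat.card_fin]

section PrimitiveRoot

variable {K : Type*} [CommGroupWithZero K] {ζ : K}

lemma IsPrimitiveRoot.zpow_eq_zpow_iff {k : ℕ} (h : IsPrimitiveRoot ζ k) (hk : k ≠ 0)
    (i i' : ℤ) : ζ ^ i = ζ ^ i' ↔ (k : ℤ) ∣ i - i' := by
  have hζ := h.ne_zero hk
  rw [← h.zpow_eq_one_iff_dvd, zpow_sub₀ hζ, div_eq_one_iff_eq (zpow_ne_zero _ hζ)]

lemma IsPrimitiveRoot.zpow_eq_pow_succ_zpow_iff {d n : ℕ} (h : IsPrimitiveRoot ζ (d * n))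
    (hd : d ≠ 0) (hn : n ≠ 0) (i : ℤ) : ζ ^ i = (ζ ^ (n + 1)) ^ i ↔ (d : ℤ) ∣ i := by
  have hζ := h.ne_zero (mul_ne_zero hd hn)
  have hsplit : (ζ ^ (n + 1)) ^ i = ζ ^ (n * i) * ζ ^ i := by
    rw [← zpow_natCast, ← zpow_mul, ← zpow_add₀ hζ]
    congr 1
    push_cast
    ring
  rw [hsplit, eq_comm, mul_eq_right₀ (zpow_ne_zero _ hζ), h.zpow_eq_one_iff_dvd, Nat.cast_mul,
    mul_comm (d : ℤ), mul_dvd_mul_iff_left (by exact_mod_cast hn)]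

end PrimitiveRoot

lemma pow_zpow_comm {G : Type*} [DivisionMonoid G] (a : G) (e : ℕ) (i : ℤ) :
    (a ^ e) ^ i = (a ^ i) ^ e := by
  rw [← zpow_natCast, ← zpow_natCast (a ^ i), ← zpow_mul, ← zpow_mul, mul_comm]

def prodBelow (E : Finset ℕ) (n : ℕ) : ℕ := ∏ t ∈ E with t < n, t

section prodBelow

variable {E : Finset ℕ} {n m : ℕ}

lemma prodBelow_pos (hE : ∀ t ∈ E, 0 < t) : 0 < prodBelow E n :=
  prod_pos fun t ht => hE t (mem_filter.1 ht).1

lemma prodBelow_dvd_prodBelow (hnm : n ≤ m) : prodBelow E n ∣ prodBelow E m :=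
  prod_dvd_prod_of_subset _ _ _ fun _ ht =>
    mem_filter.2 ⟨(mem_filter.1 ht).1, (mem_filter.1 ht).2.trans_le hnm⟩

lemma prodBelow_mul_self (E : Finset ℕ) (n : ℕ) :
    prodBelow E n * n = ∏ t ∈ insert n {t ∈ E | t < n}, t := by
  rw [prod_insert (by simp), mul_comm]
  rfl

lemma prodBelow_mul_self_dvd_prod (hn : n ∈ E) : prodBelow E n * n ∣ ∏ t ∈ E, t := by
  rw [prodBelow_mul_self]
  exact prod_dvd_prod_of_subset _ _ _ (insert_subset hn (filter_subset _ _))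

lemma prodBelow_mul_self_dvd (hn : n ∈ E) (hnm : n ≤ m) :
    prodBelow E n * n ∣ prodBelow E m * m := by
  rcases hnm.eq_or_lt with rfl | hlt
  · rfl
  rw [prodBelow_mul_self]
  refine (prod_dvd_prod_of_subset _ _ _ (insert_subset ?_ fun t ht => ?_)).mul_right m
  · exact mem_filter.2 ⟨hn, hlt⟩
  · exact mem_filter.2 ⟨(mem_filter.1 ht).1, (mem_filter.1 ht).2.trans hlt⟩

end prodBelow

lemma AddAut.zsmul_mulLeft_apply {R : Type*} [Ring R] (u : Rˣ) (i : ℤ) (x : R) :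
    (i • Multiplicative.toAdd (AddAut.mulLeft u)) x = ↑(u ^ i) * x := by
  rw [← toAdd_zpow, ← map_zpow]
  rfl

lemma Function.exists_max_ne_zero {ι M : Type*} [Fintype ι] [LinearOrder ι] [Zero M]
    {h : ι → M} (h0 : h ≠ 0) : ∃ m, h m ≠ 0 ∧ ∀ j, h j ≠ 0 → j ≤ m := by
  classical
  obtain ⟨j₀, hj₀⟩ := Function.ne_iff.1 h0
  obtain ⟨m, hm, hmax⟩ :=
    ({j | h j ≠ 0} : Finset ι).exists_max_image id ⟨j₀, by simpa using hj₀⟩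
  exact ⟨m, (mem_filter.1 hm).2, fun j hj => hmax j (by simpa using hj)⟩

section Diagonal

variable (ι K : Type*) [Field K]

def pairDiagonal : AddSubgroup (ι → K × K) where
  carrier := {h | ∀ j, (h j).1 = (h j).2}
  add_mem' ha hb j := by simp only [Pi.add_apply, Prod.fst_add, Prod.snd_add, ha j, hb j]
  zero_mem' _ := rfl
  neg_mem' ha j := by simp only [Pi.neg_apply, Prod.fst_neg, Prod.snd_neg, ha j]

variable {ι K} {h : ι → K × K}

lemma fst_ne_zero_of_mem_pairDiagonal (hh : h ∈ pairDiagonal ι K) {j : ι} (hj : h j ≠ 0) :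
    (h j).1 ≠ 0 :=
  fun h0 => hj (Prod.ext h0 ((hh j).symm.trans h0))

lemma mul_mem_pairDiagonal_iff (hh : h ∈ pairDiagonal ι K) (a : ι → K × K) :
    a * h ∈ pairDiagonal ι K ↔ ∀ j, h j ≠ 0 → (a j).1 = (a j).2 := by
  refine forall_congr' fun j => ?_
  by_cases hj : h j = 0
  · simp [hj]
  rw [imp_iff_right hj]
  simp only [Pi.mul_apply, Prod.fst_mul, Prod.snd_mul, ← hh j]
  exact mul_left_inj' (fst_ne_zero_of_mem_pairDiagonal hh hj)

lemma mul_eq_mul_iff_of_mem_pairDiagonal (hh : h ∈ pairDiagonal ι K) (a b : ι → K × K) :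
    a * h = b * h ↔ ∀ j, h j ≠ 0 → a j = b j := by
  rw [funext_iff]
  refine forall_congr' fun j => ?_
  by_cases hj : h j = 0
  · simp [hj]
  rw [imp_iff_right hj]
  have hx := fst_ne_zero_of_mem_pairDiagonal hh hj
  simp only [Pi.mul_apply, Prod.ext_iff, Prod.fst_mul, Prod.snd_mul, ← hh j, mul_left_inj' hx]

end Diagonal

section Construction

variable {E : Finset ℕ} {K : Type*} [Field K] {ζ : E → K}

def diagWeights (ζ : E → K) : E → K × K := fun j => (ζ j, ζ j ^ ((j : ℕ) + 1))

lemma isUnit_diagWeights (hζ : ∀ j, ζ j ≠ 0) : IsUnit (diagWeights ζ) :=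
  Pi.isUnit_iff.2 fun j => Prod.isUnit_iff.2
    ⟨(hζ j).isUnit, (pow_ne_zero _ (hζ j)).isUnit⟩

noncomputable def diagAut (hζ : ∀ j, ζ j ≠ 0) : AddAut (E → K × K) :=
  Multiplicative.toAdd (AddAut.mulLeft (isUnit_diagWeights hζ).unit)

lemma zsmul_diagAut_apply (hζ : ∀ j, ζ j ≠ 0) (i : ℤ) (h : E → K × K) :
    (i • diagAut hζ) h = diagWeights ζ ^ i * h := by
  rw [diagAut, AddAut.zsmul_mulLeft_apply, Units.val_zpow_eq_zpow_val, IsUnit.unit_spec]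

variable (hE : ∀ n ∈ E, 0 < n) (hζ : ∀ j : E, IsPrimitiveRoot (ζ j) (prodBelow E j * j))
include hE hζ

lemma primitiveRoot_ne_zero (j : E) : ζ j ≠ 0 :=
  (hζ j).ne_zero (mul_pos (prodBelow_pos hE) (hE j j.2)).ne'

variable {h : E → K × K} (hh : h ∈ pairDiagonal E K) {m : E} (hm : h m ≠ 0)
  (hmax : ∀ j, h j ≠ 0 → j ≤ m)
include hh hm hmax

lemma diagWeights_zpow_mul_mem_pairDiagonal_iff (i : ℤ) :
    diagWeights ζ ^ i * h ∈ pairDiagonal E K ↔ (prodBelow E m : ℤ) ∣ i := by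
  have key (j : E) :
      ((diagWeights ζ ^ i) j).1 = ((diagWeights ζ ^ i) j).2 ↔ (prodBelow E j : ℤ) ∣ i :=
    (hζ j).zpow_eq_pow_succ_zpow_iff (prodBelow_pos hE).ne' (hE j j.2).ne' i
  simp only [mul_mem_pairDiagonal_iff hh, key]
  exact ⟨fun H => H m hm, fun H j hj =>
    (Int.natCast_dvd_natCast.2 (prodBelow_dvd_prodBelow (hmax j hj))).trans H⟩

lemma diagWeights_zpow_mul_eq_iff (i i' : ℤ) :
    diagWeights ζ ^ i * h = diagWeights ζ ^ i' * h ↔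
      ((prodBelow E m * m : ℕ) : ℤ) ∣ i - i' := by
  have key (j : E) : (diagWeights ζ ^ i) j = (diagWeights ζ ^ i') j ↔
      ((prodBelow E j * j : ℕ) : ℤ) ∣ i - i' := by
    simp only [Pi.pow_apply, diagWeights, Prod.pow_mk, Prod.ext_iff, pow_zpow_comm]
    rw [and_iff_left_of_imp fun H => by rw [H]]
    exact (hζ j).zpow_eq_zpow_iff (mul_pos (prodBelow_pos hE) (hE j j.2)).ne' i i'
  simp only [mul_eq_mul_iff_of_mem_pairDiagonal hh, key]
  exact ⟨fun H => H m hm, fun H j hj =>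
    (Int.natCast_dvd_natCast.2 (prodBelow_mul_self_dvd j.2 (hmax j hj))).trans H⟩

lemma card_orbit_inter_pairDiagonal :
    Nat.card ↥(Set.range (fun i : ℤ => (i • diagAut (primitiveRoot_ne_zero hE hζ)) h) ∩
      (pairDiagonal E K : Set (E → K × K))) = m := by
  simp only [zsmul_diagAut_apply]
  exact Nat.card_range_inter_eq_of_dvd_iff (prodBelow_pos hE) (hE m m.2)
    (diagWeights_zpow_mul_eq_iff hE hζ hh hm hmax)
    (diagWeights_zpow_mul_mem_pairDiagonal_iff hE hζ hh hm hmax)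

end Construction

noncomputable def AlgRealization.ofPrimitiveRoots (K : Type) [Field K] [Fintype K]
    {E : Finset ℕ} {ζ : E → K} (hE : ∀ n ∈ E, 0 < n)
    (hζ : ∀ j : E, IsPrimitiveRoot (ζ j) (prodBelow E j * j)) :
    AlgRealization (↑E : Set ℕ) where
  G := E → K × K
  v := diagAut (primitiveRoot_ne_zero hE hζ)
  H := pairDiagonal E K
  spec := by
    ext n
    constructor
    · intro hn
      set h : E → K × K := Pi.single ⟨n, hn⟩ (1, 1)
      have hh : h ∈ pairDiagonal E K := fun j => by
        by_cases hj : j = ⟨n, hn⟩ <;> simp [h, hj]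
      have hn0 : h ⟨n, hn⟩ ≠ 0 := by simp [h]
      have hmax (j : E) (hj : h j ≠ 0) : j ≤ ⟨n, hn⟩ := by
        by_contra hjn
        exact hj (by simp [h, (lt_of_not_ge hjn).ne'])
      exact ⟨h, hh, fun h0 => hn0 (congrFun h0 _),
        card_orbit_inter_pairDiagonal hE hζ hh hn0 hmax⟩
    · rintro ⟨h, hh, h0, rfl⟩
      obtain ⟨m, hm, hmax⟩ := Function.exists_max_ne_zero h0
      rw [card_orbit_inter_pairDiagonal hE hζ hh hm hmax]
      exact m.2

lemma exists_prime_hasEnoughRootsOfUnity {N : ℕ} (hN : N ≠ 0) :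
    ∃ p : ℕ, ∃ _ : Fact p.Prime, HasEnoughRootsOfUnity (ZMod p) N := by
  obtain ⟨p, hp, -, hmod⟩ := Nat.exists_prime_gt_modEq_one 0 hN
  have hp' : Fact p.Prime := ⟨hp⟩
  have : NeZero (p - 1) := ⟨by have := hp.two_le; omega⟩
  exact ⟨p, hp', HasEnoughRootsOfUnity.of_dvd _ ((Nat.modEq_iff_dvd' hp.one_le).1 hmod.symm)⟩

theorem stmt3_general (E : Finset ℕ) (hpos : ∀ n ∈ E, 0 < n) :
    Nonempty (AlgRealization (↑E : Set ℕ)) := by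
  have hN : NeZero (∏ t ∈ E, t) := ⟨(prod_pos hpos).ne'⟩
  obtain ⟨p, _, _⟩ := exists_prime_hasEnoughRootsOfUnity hN.out
  have (j : E) : ∃ ζ : ZMod p, IsPrimitiveRoot ζ (prodBelow E j * j) :=
    have := HasEnoughRootsOfUnity.of_dvd (ZMod p) (prodBelow_mul_self_dvd_prod j.2)
    HasEnoughRootsOfUnity.exists_primitiveRoot _ _
  choose ζ hζ using this
  exact ⟨.ofPrimitiveRoots (ZMod p) hpos hζ⟩

theorem stmt3 (E : Finset ℕ) (hne : E.Nonempty) (hpos : ∀ n ∈ E, 0 < n) :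
    Nonempty (AlgRealization (↑E : Set ℕ)) :=
  stmt3_general E hpos
end

section
/- Let U and V be unitary operators on Hilbert spaces H₁ and H₂. Suppose there exist complex numbers α ≠ β with |α|, |β| ≤ 1 and a sequence of integers n_k such that U^{n_k} → αI and V^{n_k} → βI in the weak operator topology. Then the maximal spectral types of U and V are mutually singular. -/
open MeasureTheory Filter Topology

noncomputable instance : MeasurableSpace Circle := borel Circle
instance : BorelSpace Circle := ⟨rfl⟩

/-- `ν` is the spectral measure of the vector `f` for the unitary `U`:
`∫_𝕋 zⁿ dν = ⟨Uⁿ f, f⟩` for all `n ∈ ℤ`. -/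
def IsSpectralMeasure {H : Type*} [NormedAddCommGroup H] [InnerProductSpace ℂ H]
    (U : H ≃ₗᵢ[ℂ] H) (f : H) (ν : Measure Circle) : Prop :=
  ∀ n : ℤ, ∫ z : Circle, ((z ^ n : Circle) : ℂ) ∂ν = (inner ℂ ((U ^ n) f) f : ℂ)

/-- `σ` is a measure of maximal spectral type of the unitary `U` : it is a finite
measure dominating the spectral measure of every vector, and is minimal (w.r.t.
absolute continuity) among measures with this property. -/
def IsMaximalSpectralType {H : Type*} [NormedAddCommGroup H] [InnerProductSpace ℂ H]
    (U : H ≃ₗᵢ[ℂ] H) (σ : Measure Circle) : Prop :=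
  IsFiniteMeasure σ ∧
  (∀ f : H, ∃ ν : Measure Circle, IsSpectralMeasure U f ν ∧ ν ≪ σ) ∧
  (∀ τ : Measure Circle, (∀ f : H, ∃ ν : Measure Circle, IsSpectralMeasure U f ν ∧ ν ≪ τ) →
      σ ≪ τ)

/-! If `U^{n_k} → c I` weakly, every spectral measure `ν` of `U` satisfies
`∫ zᵐ z^{n_k} dν → c ∫ zᵐ dν` for all `m`. The functionals `h ↦ ∫ h z^{n_k} dν` are uniformly
bounded on `L¹(ν)`, in which trigonometric polynomials are dense (Stone–Weierstrass), so
`∫ h z^{n_k} dν → c ∫ h dν` for every `h ∈ L¹(ν)`; taking `h = dρ/dν` shows the same limit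
behaviour for every finite `ρ ≪ ν`. A finite measure absolutely continuous with respect to a
spectral measure of `U` and to one of `V` thus satisfies `α ρ(𝕋) = β ρ(𝕋)`, hence vanishes.
Minimality of the maximal spectral type, applied twice to a singular part of the Lebesgue
decomposition, upgrades this mutual singularity of spectral measures to `σ_U ⟂ σ_V`. -/

open Set Submodule

noncomputable def circleChar (m : ℤ) : C(Circle, ℂ) :=
  ⟨fun z => ((z ^ m : Circle) : ℂ), continuous_subtype_val.comp (continuous_zpow m)⟩

@[simp]
lemma circleChar_apply (m : ℤ) (z : Circle) : circleChar m z = ((z ^ m : Circle) : ℂ) := rfl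

lemma circleChar_add (a b : ℤ) : circleChar (a + b) = circleChar a * circleChar b := by
  ext z; simp [zpow_add]

lemma star_circleChar (m : ℤ) : star (circleChar m) = circleChar (-m) := by
  ext z
  simp only [ContinuousMap.star_apply, circleChar_apply, zpow_neg, Circle.coe_inv_eq_conj]
  rfl

lemma norm_circleChar (m : ℤ) (z : Circle) : ‖circleChar m z‖ = 1 :=
  Circle.norm_coe _

noncomputable def circleCharSubalgebra : StarSubalgebra ℂ C(Circle, ℂ) where
  toSubalgebra := Algebra.adjoin ℂ (range circleChar)
  star_mem' := by
    change Algebra.adjoin ℂ (range circleChar) ≤ star (Algebra.adjoin ℂ (range circleChar))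
    refine Algebra.adjoin_le ?_
    rintro - ⟨m, rfl⟩
    exact Algebra.subset_adjoin ⟨-m, (star_circleChar m).symm⟩

lemma circleCharSubalgebra_toSubmodule :
    Subalgebra.toSubmodule circleCharSubalgebra.toSubalgebra = span ℂ (range circleChar) := by
  apply Algebra.adjoin_eq_span_of_subset
  refine Subset.trans (fun p hp => ?_) subset_span
  induction hp using Submonoid.closure_induction with
  | mem p hp => exact hp
  | one => exact ⟨0, by ext z; simp⟩
  | mul _ _ _ _ hp hq =>
    obtain ⟨a, rfl⟩ := hp
    obtain ⟨b, rfl⟩ := hq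
    exact ⟨a + b, circleChar_add a b⟩

lemma span_circleChar_closure_eq_top :
    (span ℂ (range circleChar)).topologicalClosure = ⊤ := by
  have hsep : circleCharSubalgebra.SeparatesPoints := by
    intro x y hxy
    refine ⟨_, ⟨circleChar 1, Algebra.subset_adjoin ⟨1, rfl⟩, rfl⟩, ?_⟩
    simpa using fun h => hxy (Circle.coe_injective h)
  rw [← circleCharSubalgebra_toSubmodule]
  exact congr_arg (Subalgebra.toSubmodule <| StarSubalgebra.toSubalgebra ·)
    (ContinuousMap.starSubalgebra_topologicalClosure_eq_top_of_separatesPoints _ hsep)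

lemma MeasureTheory.Integrable.mul_circleChar {ν : Measure Circle} {g : Circle → ℂ}
    (hg : Integrable g ν) (m : ℤ) : Integrable (fun z => g z * circleChar m z) ν :=
  hg.mul_bdd (circleChar m).continuous.aestronglyMeasurable
    (ae_of_all _ fun z => (norm_circleChar m z).le)

def HasFourierLimit (ν : Measure Circle) (n : ℕ → ℤ) (c : ℂ) : Prop :=
  ∀ m : ℤ, Tendsto (fun k => ∫ z, circleChar m z * circleChar (n k) z ∂ν) atTop
    (𝓝 (c * ∫ z, circleChar m z ∂ν))

namespace HasFourierLimit

variable {ν : Measure Circle} {n : ℕ → ℤ} {c : ℂ}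

lemma tendsto_integral_mul_of_mem_span [IsFiniteMeasure ν] (hν : HasFourierLimit ν n c)
    {p : C(Circle, ℂ)} (hp : p ∈ span ℂ (range circleChar)) :
    Tendsto (fun k => ∫ z, p z * circleChar (n k) z ∂ν) atTop (𝓝 (c * ∫ z, p z ∂ν)) := by
  have hcont_int (q : C(Circle, ℂ)) : Integrable q ν :=
    q.continuous.integrable_of_hasCompactSupport (.of_compactSpace _)
  induction hp using span_induction with
  | mem _ hp =>
    obtain ⟨m, rfl⟩ := hp
    exact hν m
  | zero => simp
  | add p q _ _ hp hq =>
    convert hp.add hq using 1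
    · funext k
      simp only [ContinuousMap.add_apply, add_mul]
      exact integral_add ((hcont_int p).mul_circleChar _) ((hcont_int q).mul_circleChar _)
    · simp only [ContinuousMap.add_apply]
      rw [integral_add (hcont_int p) (hcont_int q), mul_add]
  | smul a p _ hp =>
    convert hp.const_mul a using 1
    · funext k
      simp only [ContinuousMap.smul_apply, smul_eq_mul, mul_assoc, integral_const_mul]
    · simp only [ContinuousMap.smul_apply, smul_eq_mul, integral_const_mul]
      rw [mul_left_comm]

lemma tendsto_integral_mul [IsFiniteMeasure ν] (hν : HasFourierLimit ν n c) {h : Circle → ℂ}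
    (hh : Integrable h ν) :
    Tendsto (fun k => ∫ z, h z * circleChar (n k) z ∂ν) atTop (𝓝 (c * ∫ z, h z ∂ν)) := by
  let F : ℕ → (Circle →₁[ν] ℂ) → ℂ := fun k g => ∫ z, g z * circleChar (n k) z ∂ν
  have hF : Equicontinuous F := by
    refine (Metric.uniformEquicontinuous_of_continuity_modulus id tendsto_id F
      fun g g' k => ?_).equicontinuous
    have hg := L1.integrable_coeFn g
    have hg' := L1.integrable_coeFn g'
    rw [dist_eq_norm, L1.dist_eq_integral_dist, ← integral_sub (hg.mul_circleChar _)
      (hg'.mul_circleChar _)]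
    refine norm_integral_le_of_norm_le
      ((hg.sub hg').norm.congr (ae_of_all _ fun z => (dist_eq_norm _ _).symm))
      (ae_of_all _ fun z => ?_)
    rw [← sub_mul, norm_mul, norm_circleChar, mul_one, dist_eq_norm]
  let S : Set (Circle →₁[ν] ℂ) := {g | Tendsto (F · g) atTop (𝓝 (c * ∫ z, g z ∂ν))}
  have mem_S {g : Circle →₁[ν] ℂ} {q : Circle → ℂ} (hgq : g =ᵐ[ν] q) :
      g ∈ S ↔
        Tendsto (fun k => ∫ z, q z * circleChar (n k) z ∂ν) atTop (𝓝 (c * ∫ z, q z ∂ν)) := by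
    have hFk (k : ℕ) : F k g = ∫ z, q z * circleChar (n k) z ∂ν :=
      integral_congr_ae (hgq.mul (ae_of_all _ fun _ => rfl))
    simp only [S, mem_ofPred_eq, hFk, integral_congr_ae hgq]
  have hS : IsClosed S := hF.isClosed_setOfPred_tendsto (continuous_const.mul continuous_integral)
  have toLp_mem_S (p : C(Circle, ℂ)) : ContinuousMap.toLp 1 ν ℂ p ∈ S := by
    have hT : IsClosed {q : C(Circle, ℂ) | ContinuousMap.toLp 1 ν ℂ q ∈ S} :=
      hS.preimage (ContinuousMap.toLp 1 ν ℂ).continuous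
    have hspan : (span ℂ (range circleChar) : Set C(Circle, ℂ)) ⊆
        {q | ContinuousMap.toLp 1 ν ℂ q ∈ S} := fun q hq =>
      (mem_S (ContinuousMap.coeFn_toLp ν q)).2 (hν.tendsto_integral_mul_of_mem_span hq)
    refine closure_minimal hspan hT ?_
    rw [← topologicalClosure_coe, span_circleChar_closure_eq_top]
    trivial
  exact (mem_S hh.coeFn_toL1).1 <|
    (ContinuousMap.toLp_denseRange ℂ ν ℂ ENNReal.one_ne_top).induction_on (p := (· ∈ S)) _ hS
      toLp_mem_S

lemma of_absolutelyContinuous [IsFiniteMeasure ν] (hν : HasFourierLimit ν n c)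
    {ρ : Measure Circle} [IsFiniteMeasure ρ] (hρ : ρ ≪ ν) : HasFourierLimit ρ n c := by
  intro m
  have hd : Integrable (fun z => ((ρ.rnDeriv ν z).toReal : ℂ) * circleChar m z) ν :=
    Measure.integrable_toReal_rnDeriv.ofReal.mul_circleChar m
  have hρν (f : Circle → ℂ) : ∫ z, ((ρ.rnDeriv ν z).toReal : ℂ) * f z ∂ν = ∫ z, f z ∂ρ := by
    simp only [← integral_rnDeriv_smul hρ, Complex.real_smul]
  simpa only [mul_assoc, hρν] using hν.tendsto_integral_mul hd

lemma eq_zero_of_ne [IsFiniteMeasure ν] {c' : ℂ} (h : HasFourierLimit ν n c)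
    (h' : HasFourierLimit ν n c') (hc : c ≠ c') : ν = 0 := by
  have hlim := tendsto_nhds_unique (h 0) (h' 0)
  simp only [circleChar_apply, zpow_zero, Circle.coe_one, mul_one, integral_const,
    Complex.real_smul] at hlim
  have : (ν.real univ : ℂ) = 0 := by
    by_contra hne
    exact hc ((mul_left_inj' hne).1 hlim)
  rwa [Complex.ofReal_eq_zero, measureReal_eq_zero_iff, Measure.measure_univ_eq_zero] at this

lemma mutuallySingular {ν' : Measure Circle} [IsFiniteMeasure ν] [IsFiniteMeasure ν'] {c' : ℂ}
    (h : HasFourierLimit ν n c) (h' : HasFourierLimit ν' n c') (hc : c ≠ c') : ν ⟂ₘ ν' := by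
  rw [← Measure.withDensity_rnDeriv_eq_zero]
  have hle := Measure.withDensity_rnDeriv_le ν ν'
  have : IsFiniteMeasure (ν'.withDensity (ν.rnDeriv ν')) := isFiniteMeasure_of_le ν hle
  exact (h.of_absolutelyContinuous (Measure.absolutelyContinuous_of_le hle)).eq_zero_of_ne
    (h'.of_absolutelyContinuous (withDensity_absolutelyContinuous _ _)) hc

end HasFourierLimit

lemma MeasureTheory.Measure.AbsolutelyContinuous.singularPart_of_mutuallySingular
    {α : Type*} [MeasurableSpace α] {μ σ ν : Measure α} [σ.HaveLebesgueDecomposition ν]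
    (hμσ : μ ≪ σ) (hμν : μ ⟂ₘ ν) : μ ≪ σ.singularPart ν := by
  rw [σ.haveLebesgueDecomposition_add ν] at hμσ
  exact absolutelyContinuous_of_add_of_mutuallySingular hμσ
    (hμν.mono_ac .rfl (withDensity_absolutelyContinuous _ _))

section Spectral

variable {H : Type*} [NormedAddCommGroup H] [InnerProductSpace ℂ H] {U : H ≃ₗᵢ[ℂ] H}

lemma isSpectralMeasure_zero : IsSpectralMeasure U 0 0 := fun _ => by simp

namespace IsSpectralMeasure

variable {f : H} {μ : Measure Circle}

lemma measureReal_univ (h : IsSpectralMeasure U f μ) : μ.real univ = ‖f‖ ^ 2 := by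
  have h0 := h 0
  simp only [zpow_zero, Circle.coe_one, integral_const, Complex.real_smul, mul_one,
    LinearIsometryEquiv.coe_one, id, inner_self_eq_norm_sq_to_K] at h0
  rw [← RCLike.ofReal_pow] at h0
  exact Complex.ofReal_injective h0

lemma isFiniteMeasure (h : IsSpectralMeasure U f μ) (hf : f ≠ 0) : IsFiniteMeasure μ := by
  refine ⟨lt_top_iff_ne_top.2 fun htop => hf ?_⟩
  have hμ := h.measureReal_univ
  rw [measureReal_def, htop, ENNReal.toReal_top] at hμ
  simpa using hμ.symm

lemma hasFourierLimit (h : IsSpectralMeasure U f μ) {n : ℕ → ℤ} {c : ℂ}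
    (hU : ∀ a b : H, Tendsto (fun k => (inner ℂ ((U ^ n k) a) b : ℂ)) atTop
      (𝓝 (c * (inner ℂ a b : ℂ)))) :
    HasFourierLimit μ n c := by
  intro m
  have hk (k : ℕ) :
      ∫ z, circleChar m z * circleChar (n k) z ∂μ = inner ℂ ((U ^ n k) ((U ^ m) f)) f := by
    simp only [← ContinuousMap.mul_apply, ← circleChar_add]
    rw [circleChar, ContinuousMap.coe_mk, h, add_comm, zpow_add]
    rfl
  have hlim := (hU ((U ^ m) f) f).congr fun k => (hk k).symm
  rwa [← h m] at hlim

end IsSpectralMeasure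

namespace IsMaximalSpectralType

variable {σ : Measure Circle}

lemma exists_isFiniteMeasure (hσ : IsMaximalSpectralType U σ) (f : H) :
    ∃ μ : Measure Circle, IsSpectralMeasure U f μ ∧ IsFiniteMeasure μ ∧ μ ≪ σ := by
  obtain ⟨μ, hμ, hμσ⟩ := hσ.2.1 f
  by_cases hf : f = 0
  · subst hf
    exact ⟨0, isSpectralMeasure_zero, inferInstance, .zero σ⟩
  · exact ⟨μ, hμ, hμ.isFiniteMeasure hf, hμσ⟩

lemma mutuallySingular_of_forall (hσ : IsMaximalSpectralType U σ) {ν : Measure Circle}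
    [SigmaFinite ν]
    (h : ∀ (f : H) (μ : Measure Circle) [IsFiniteMeasure μ], IsSpectralMeasure U f μ → μ ⟂ₘ ν) :
    σ ⟂ₘ ν := by
  have := hσ.1
  refine (Measure.mutuallySingular_singularPart σ ν).mono_ac (hσ.2.2 _ fun f => ?_) .rfl
  obtain ⟨μ, hμ, hfin, hμσ⟩ := hσ.exists_isFiniteMeasure f
  exact ⟨μ, hμ, hμσ.singularPart_of_mutuallySingular (h f μ hμ)⟩

end IsMaximalSpectralType

end Spectral

theorem stmt5_general {H₁ H₂ : Type*}
    [NormedAddCommGroup H₁] [InnerProductSpace ℂ H₁]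
    [NormedAddCommGroup H₂] [InnerProductSpace ℂ H₂]
    (U : H₁ ≃ₗᵢ[ℂ] H₁) (V : H₂ ≃ₗᵢ[ℂ] H₂) (α β : ℂ) (hαβ : α ≠ β)
    (n : ℕ → ℤ)
    (hU : ∀ f g : H₁, Tendsto (fun k => (inner ℂ ((U ^ n k) f) g : ℂ)) atTop
      (𝓝 (α * (inner ℂ f g : ℂ))))
    (hV : ∀ f g : H₂, Tendsto (fun k => (inner ℂ ((V ^ n k) f) g : ℂ)) atTop
      (𝓝 (β * (inner ℂ f g : ℂ))))
    (σU σV : Measure Circle)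
    (hσU : IsMaximalSpectralType U σU) (hσV : IsMaximalSpectralType V σV) :
    σU ⟂ₘ σV := by
  have := hσV.1
  refine hσU.mutuallySingular_of_forall fun f μ _ hμ => ?_
  refine (hσV.mutuallySingular_of_forall fun g μ' _ hμ' => ?_).symm
  exact (hμ'.hasFourierLimit hV).mutuallySingular (hμ.hasFourierLimit hU) hαβ.symm

theorem stmt5 {H₁ H₂ : Type*}
    [NormedAddCommGroup H₁] [InnerProductSpace ℂ H₁] [CompleteSpace H₁]
    [NormedAddCommGroup H₂] [InnerProductSpace ℂ H₂] [CompleteSpace H₂]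
    (U : H₁ ≃ₗᵢ[ℂ] H₁) (V : H₂ ≃ₗᵢ[ℂ] H₂) (α β : ℂ) (hαβ : α ≠ β)
    (hα : ‖α‖ ≤ 1) (hβ : ‖β‖ ≤ 1) (n : ℕ → ℤ)
    (hU : ∀ f g : H₁, Tendsto (fun k => (inner ℂ ((U ^ n k) f) g : ℂ)) atTop
      (𝓝 (α * (inner ℂ f g : ℂ))))
    (hV : ∀ f g : H₂, Tendsto (fun k => (inner ℂ ((V ^ n k) f) g : ℂ)) atTop
      (𝓝 (β * (inner ℂ f g : ℂ))))
    (σU σV : Measure Circle)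
    (hσU : IsMaximalSpectralType U σU) (hσV : IsMaximalSpectralType V σV) :
    σU ⟂ₘ σV :=
  stmt5_general U V α β hαβ n hU hV σU σV hσU hσV
end

section
/- Let V be a unitary operator with simple continuous spectrum on a Hilbert space H, and suppose aI + bV lies in the weak closure of the powers {Vⁿ : n ∈ ℤ} for some nonzero complex a, b. Then every (V⊗V)-invariant closed subspace of H⊗H containing h⊗h and h⊗Vh for a cyclic vector h must be all of H⊗H; in particular the spectral multiplicity of V⊗V is at most 2. -/
/-!
Along the subsequence `n k`, `(V ⊗ V) ^ n k (f ⊗ g) = V ^ n k f ⊗ V ^ n k g` converges weakly to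
`T f ⊗ T g` with `T = āI + b̄V`, and closed subspaces are weakly closed. So a closed
`V ⊗ V`-invariant subspace `C` containing `f ⊗ g` contains `T f ⊗ T g`, and expanding (with
`Vf ⊗ Vg ∈ C`) gives `f ⊗ Vg + Vf ⊗ g ∈ C`. Taking `f = h`, `g = Vᵈh`: once `h ⊗ Vᵈh ∈ C`, we have
`h ⊗ Vᵈ⁺¹h ∈ C ↔ h ⊗ Vᵈ⁻¹h ∈ C`, so from `d = 0, 1` every `h ⊗ Vᵈh`, hence every `Vⁱh ⊗ Vʲh`,
lies in `C`. These span a dense subspace because `h` is cyclic. Finally, the closed span of the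
cyclic subspaces of `h ⊗ h` and `h ⊗ Vh` is such a `C`.
-/

open Filter Topology

/-- The `U`-cyclic subspace generated by `f`. -/
noncomputable def cyclicSubspace {H : Type*} [NormedAddCommGroup H] [InnerProductSpace ℂ H]
    (U : H ≃ₗᵢ[ℂ] H) (f : H) : Submodule ℂ H :=
  (Submodule.span ℂ (Set.range fun n : ℤ => (U ^ n) f)).topologicalClosure

open scoped InnerProductSpace ComplexConjugate

theorem forall_int_of_step_iff {P : ℤ → Prop} (h0 : P 0) (h1 : P 1)
    (hstep : ∀ d, P d → (P (d + 1) ↔ P (d - 1))) (d : ℤ) : P d := by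
  suffices ∀ d, P d ∧ P (d + 1) from (this d).1
  intro d
  induction d using Int.induction_on with
  | zero => exact ⟨h0, by simpa using h1⟩
  | succ k ih => exact ⟨ih.2, (hstep _ ih.2).mpr (by simpa using ih.1)⟩
  | pred k ih => exact ⟨(hstep _ ih.1).mp ih.2, by simpa using ih.1⟩

section InnerProduct

variable {𝕜 E ι : Type*} [RCLike 𝕜] [NormedAddCommGroup E] [InnerProductSpace 𝕜 E]
  {l : Filter ι}

theorem isClosed_setOf_tendsto_inner {u : ι → E} {R : ℝ} (hR : ∀ i, ‖u i‖ ≤ R) (L : E) :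
    IsClosed {z : E | Tendsto (fun i => ⟪u i, z⟫_𝕜) l (𝓝 ⟪L, z⟫_𝕜)} := by
  refine Equicontinuous.isClosed_setOfPred_tendsto ?_ (continuous_const.inner continuous_id)
  refine (LipschitzWith.uniformEquicontinuous _ R.toNNReal fun i => ?_).equicontinuous
  refine LipschitzWith.of_dist_le_mul fun z w => ?_
  rw [dist_eq_norm, dist_eq_norm, ← inner_sub_right]
  exact (norm_inner_le_norm _ _).trans
    (mul_le_mul_of_nonneg_right ((hR i).trans (Real.le_coe_toNNReal R)) (norm_nonneg _))

theorem mem_of_tendsto_inner [CompleteSpace E] [l.NeBot] {C : Submodule 𝕜 E}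
    (hC : IsClosed (C : Set E)) {u : ι → E} {L : E} (hu : ∀ i, u i ∈ C)
    (hL : ∀ z, Tendsto (fun i => ⟪u i, z⟫_𝕜) l (𝓝 ⟪L, z⟫_𝕜)) : L ∈ C := by
  have : CompleteSpace C := hC.completeSpace_coe
  rw [← C.orthogonal_orthogonal, Submodule.mem_orthogonal']
  intro z hz
  have hzero : (fun i => ⟪u i, z⟫_𝕜) = fun _ => 0 :=
    funext fun i => Submodule.inner_right_of_mem_orthogonal (hu i) hz
  exact tendsto_nhds_unique (hL z) (hzero ▸ tendsto_const_nhds)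

end InnerProduct

section Invariance

variable {R E : Type*} [Semiring R] [SeminormedAddCommGroup E] [Module R E]

theorem zpow_apply_mem {W : E ≃ₗᵢ[R] E} {C : Submodule R E} (hW : ∀ x ∈ C, W x ∈ C)
    (hW' : ∀ x ∈ C, W.symm x ∈ C) (m : ℤ) {x : E} (hx : x ∈ C) : (W ^ m) x ∈ C := by
  induction m using Int.induction_on generalizing x with
  | zero => simpa using hx
  | succ k ih =>
    rw [zpow_add_one, LinearIsometryEquiv.coe_mul, Function.comp_apply]
    exact ih (hW x hx)
  | pred k ih =>
    rw [zpow_sub_one, LinearIsometryEquiv.coe_mul, Function.comp_apply,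
      LinearIsometryEquiv.coe_inv]
    exact ih (hW' x hx)

end Invariance

section Cyclic

variable {H : Type*} [NormedAddCommGroup H] [InnerProductSpace ℂ H]

theorem mem_cyclicSubspace_self (U : H ≃ₗᵢ[ℂ] H) (f : H) : f ∈ cyclicSubspace U f :=
  Submodule.le_topologicalClosure _ (Submodule.subset_span ⟨0, rfl⟩)

theorem zpow_apply_mem_cyclicSubspace (U : H ≃ₗᵢ[ℂ] H) (f : H) (k : ℤ) {x : H}
    (hx : x ∈ cyclicSubspace U f) : (U ^ k) x ∈ cyclicSubspace U f := by
  have hspan : Submodule.span ℂ (Set.range fun n : ℤ => (U ^ n) f) ≤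
      (Submodule.span ℂ (Set.range fun n : ℤ => (U ^ n) f)).comap
        (U ^ k).toLinearEquiv.toLinearMap :=
    Submodule.span_le.mpr <| Set.range_subset_iff.mpr fun m =>
      Submodule.subset_span ⟨k + m, by simp only [zpow_add]; rfl⟩
  exact map_mem_closure (U ^ k).continuous hx fun y hy => hspan hy

theorem zpow_apply_mem_closure_sup_cyclicSubspace (U : H ≃ₗᵢ[ℂ] H) (f g : H) (k : ℤ) {x : H}
    (hx : x ∈ (cyclicSubspace U f ⊔ cyclicSubspace U g).topologicalClosure) :
    (U ^ k) x ∈ (cyclicSubspace U f ⊔ cyclicSubspace U g).topologicalClosure := by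
  refine map_mem_closure (U ^ k).continuous hx fun y hy => ?_
  obtain ⟨y₁, hy₁, y₂, hy₂, rfl⟩ := Submodule.mem_sup.mp hy
  rw [map_add]
  exact add_mem (Submodule.mem_sup_left (zpow_apply_mem_cyclicSubspace U f k hy₁))
    (Submodule.mem_sup_right (zpow_apply_mem_cyclicSubspace U g k hy₂))

end Cyclic

section TensorModel

variable {H K : Type*} [NormedAddCommGroup H] [InnerProductSpace ℂ H]
  [NormedAddCommGroup K] [InnerProductSpace ℂ K] (tp : H →ₗ[ℂ] H →ₗ[ℂ] K)

theorem norm_tp (hinner : ∀ a b c d : H, ⟪tp a b, tp c d⟫_ℂ = ⟪a, c⟫_ℂ * ⟪b, d⟫_ℂ) (x y : H) :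
    ‖tp x y‖ = ‖x‖ * ‖y‖ := by
  have h := hinner x y x y
  simp only [inner_self_eq_norm_sq_to_K] at h
  have h' : ‖tp x y‖ ^ 2 = (‖x‖ * ‖y‖) ^ 2 := by rw [mul_pow]; exact_mod_cast h
  exact (pow_left_inj₀ (norm_nonneg _) (by positivity) two_ne_zero).mp h'

theorem continuous_tp (hinner : ∀ a b c d : H, ⟪tp a b, tp c d⟫_ℂ = ⟪a, c⟫_ℂ * ⟪b, d⟫_ℂ) :
    Continuous fun p : H × H => tp p.1 p.2 :=
  (tp.mkContinuous₂ 1 fun x y => by rw [norm_tp tp hinner, one_mul]).continuous₂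

theorem tp_mem_of_dense_span (hinner : ∀ a b c d : H, ⟪tp a b, tp c d⟫_ℂ = ⟪a, c⟫_ℂ * ⟪b, d⟫_ℂ)
    {C : Submodule ℂ K} (hC : IsClosed (C : Set K)) {s : Set H}
    (hs : (Submodule.span ℂ s).topologicalClosure = ⊤) (hsC : ∀ x ∈ s, ∀ y ∈ s, tp x y ∈ C)
    (x y : H) : tp x y ∈ C := by
  have hspan : ∀ x ∈ Submodule.span ℂ s, ∀ y ∈ Submodule.span ℂ s, tp x y ∈ C := by
    refine Submodule.map₂_le.mp ?_
    rw [Submodule.map₂_span_span, Submodule.span_le]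
    rintro _ ⟨x, hx, y, hy, rfl⟩
    exact hsC x hx y hy
  have hdense : Dense ((Submodule.span ℂ s : Set H) ×ˢ (Submodule.span ℂ s : Set H)) :=
    have hs' := Submodule.dense_iff_topologicalClosure_eq_top.mpr hs
    hs'.prod hs'
  exact hdense.induction (P := fun p : H × H => tp p.1 p.2 ∈ C)
    (fun p hp => hspan _ hp.1 _ hp.2) (hC.preimage (continuous_tp tp hinner)) (x, y)

theorem tendsto_inner_tp {ι : Type*} {l : Filter ι}
    (hinner : ∀ a b c d : H, ⟪tp a b, tp c d⟫_ℂ = ⟪a, c⟫_ℂ * ⟪b, d⟫_ℂ)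
    (hdense : (Submodule.span ℂ {x : K | ∃ a b : H, x = tp a b}).topologicalClosure = ⊤)
    {u v : ι → H} {x y : H} {R : ℝ} (hR : ∀ i, ‖tp (u i) (v i)‖ ≤ R)
    (hu : ∀ c, Tendsto (fun i => ⟪u i, c⟫_ℂ) l (𝓝 ⟪x, c⟫_ℂ))
    (hv : ∀ c, Tendsto (fun i => ⟪v i, c⟫_ℂ) l (𝓝 ⟪y, c⟫_ℂ)) (z : K) :
    Tendsto (fun i => ⟪tp (u i) (v i), z⟫_ℂ) l (𝓝 ⟪tp x y, z⟫_ℂ) := by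
  refine (Submodule.dense_iff_topologicalClosure_eq_top.mpr hdense).induction
    (P := fun z => Tendsto (fun i => ⟪tp (u i) (v i), z⟫_ℂ) l (𝓝 ⟪tp x y, z⟫_ℂ))
    (fun z hz => ?_) (isClosed_setOf_tendsto_inner hR _) z
  induction hz using Submodule.span_induction with
  | mem _ hw =>
    obtain ⟨c, d, rfl⟩ := hw
    simp only [hinner]
    exact (hu c).mul (hv d)
  | zero => simpa only [inner_zero_right] using tendsto_const_nhds
  | add _ _ _ _ ih₁ ih₂ => simpa only [inner_add_right] using ih₁.add ih₂
  | smul r _ _ ih => simpa only [inner_smul_right] using ih.const_mul r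

theorem eq_top_of_tp_mem
    (hdense : (Submodule.span ℂ {x : K | ∃ a b : H, x = tp a b}).topologicalClosure = ⊤)
    {C : Submodule ℂ K} (hC : IsClosed (C : Set K)) (h : ∀ x y, tp x y ∈ C) : C = ⊤ := by
  refine eq_top_iff.mpr (hdense ▸ Submodule.topologicalClosure_minimal _ ?_ hC)
  exact Submodule.span_le.mpr fun _ ⟨x, y, hxy⟩ => hxy ▸ h x y

end TensorModel

section TensorSquare

variable {H K : Type*} [NormedAddCommGroup H] [InnerProductSpace ℂ H]
  [NormedAddCommGroup K] [InnerProductSpace ℂ K]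
  {V : H ≃ₗᵢ[ℂ] H} {W : K ≃ₗᵢ[ℂ] K} {tp : H →ₗ[ℂ] H →ₗ[ℂ] K}

theorem zpow_apply_tp (hW : ∀ a b : H, W (tp a b) = tp (V a) (V b)) (m : ℤ) (f g : H) :
    (W ^ m) (tp f g) = tp ((V ^ m) f) ((V ^ m) g) := by
  induction m using Int.induction_on generalizing f g with
  | zero => simp
  | succ k ih =>
    simp only [zpow_add_one, LinearIsometryEquiv.coe_mul, Function.comp_apply, hW, ih]
  | pred k ih =>
    have hW' (a b : H) : W.symm (tp a b) = tp (V.symm a) (V.symm b) :=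
      W.symm_apply_eq.mpr (by rw [hW, V.apply_symm_apply, V.apply_symm_apply])
    simp only [zpow_sub_one, LinearIsometryEquiv.coe_mul, Function.comp_apply,
      LinearIsometryEquiv.coe_inv, hW', ih]

variable {C : Submodule ℂ K}

theorem tp_zpow_zpow_mem (hW : ∀ a b : H, W (tp a b) = tp (V a) (V b))
    (hCW : ∀ x ∈ C, W x ∈ C) (hCW' : ∀ x ∈ C, W.symm x ∈ C)
    (hsum : ∀ {f g : H}, tp f g ∈ C → tp f (V g) + tp (V f) g ∈ C)
    {h : H} (h₀ : tp h h ∈ C) (h₁ : tp h (V h) ∈ C) (i j : ℤ) :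
    tp ((V ^ i) h) ((V ^ j) h) ∈ C := by
  have hV (e : ℤ) : V ((V ^ e) h) = (V ^ (e + 1)) h := by
    rw [add_comm, zpow_add, zpow_one]; rfl
  have hdiag : ∀ d : ℤ, tp h ((V ^ d) h) ∈ C := by
    refine forall_int_of_step_iff (by simpa using h₀) (by simpa using h₁) fun d hd => ?_
    have hs := hsum hd
    rw [hV, ← sub_add_cancel d 1, ← hV (d - 1), ← hW, sub_add_cancel] at hs
    exact ⟨fun h' => by simpa using hCW' _ ((C.add_mem_iff_right h').mp hs),
      fun h' => (C.add_mem_iff_left (hCW _ h')).mp hs⟩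
  have hj : (V ^ j) h = (V ^ i) ((V ^ (j - i)) h) := by
    rw [← Function.comp_apply (f := ⇑(V ^ i)), ← LinearIsometryEquiv.coe_mul, ← zpow_add,
      add_sub_cancel]
  rw [hj, ← zpow_apply_tp hW]
  exact zpow_apply_mem hCW hCW' i (hdiag _)

variable [CompleteSpace K]

theorem tp_mem_of_weakLimit (hinner : ∀ a b c d : H, ⟪tp a b, tp c d⟫_ℂ = ⟪a, c⟫_ℂ * ⟪b, d⟫_ℂ)
    (hdense : (Submodule.span ℂ {x : K | ∃ a b : H, x = tp a b}).topologicalClosure = ⊤)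
    (hW : ∀ a b : H, W (tp a b) = tp (V a) (V b))
    (hC : IsClosed (C : Set K)) (hCW : ∀ x ∈ C, W x ∈ C) (hCW' : ∀ x ∈ C, W.symm x ∈ C)
    {n : ℕ → ℤ} {T : H → H}
    (hT : ∀ f c, Tendsto (fun k => ⟪(V ^ n k) f, c⟫_ℂ) atTop (𝓝 ⟪T f, c⟫_ℂ))
    {f g : H} (hfg : tp f g ∈ C) : tp (T f) (T g) ∈ C := by
  refine mem_of_tendsto_inner hC (l := atTop) (u := fun k => (W ^ n k) (tp f g))
    (fun k => zpow_apply_mem hCW hCW' _ hfg) fun z => ?_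
  simp only [zpow_apply_tp hW]
  refine tendsto_inner_tp tp hinner hdense (R := ‖tp f g‖) (fun k => ?_) (hT f) (hT g) z
  rw [← zpow_apply_tp hW, LinearIsometryEquiv.norm_map]

theorem tp_add_tp_mem (hinner : ∀ a b c d : H, ⟪tp a b, tp c d⟫_ℂ = ⟪a, c⟫_ℂ * ⟪b, d⟫_ℂ)
    (hdense : (Submodule.span ℂ {x : K | ∃ a b : H, x = tp a b}).topologicalClosure = ⊤)
    (hW : ∀ a b : H, W (tp a b) = tp (V a) (V b))
    (hC : IsClosed (C : Set K)) (hCW : ∀ x ∈ C, W x ∈ C) (hCW' : ∀ x ∈ C, W.symm x ∈ C)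
    {a b : ℂ} (ha : a ≠ 0) (hb : b ≠ 0) {n : ℕ → ℤ}
    (hwcp : ∀ f g : H, Tendsto (fun k => ⟪(V ^ n k) f, g⟫_ℂ) atTop
      (𝓝 (a * ⟪f, g⟫_ℂ + b * ⟪V f, g⟫_ℂ)))
    {f g : H} (hfg : tp f g ∈ C) : tp f (V g) + tp (V f) g ∈ C := by
  -- `V ^ n k → aI + bV` weakly means `(V ^ n k) x → conj a • x + conj b • V x` weakly.
  have hlim : tp (conj a • f + conj b • V f) (conj a • g + conj b • V g) ∈ C :=
    tp_mem_of_weakLimit hinner hdense hW hC hCW hCW' (T := fun x => conj a • x + conj b • V x)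
      (fun x c => by
        simpa only [inner_add_left, inner_smul_left, RingHomCompTriple.comp_apply,
          RingHom.id_apply, mul_comm] using hwcp x c) hfg
  have hexpand : tp (conj a • f + conj b • V f) (conj a • g + conj b • V g) =
      (conj a * conj a) • tp f g + (conj a * conj b) • (tp f (V g) + tp (V f) g) +
        (conj b * conj b) • tp (V f) (V g) := by
    simp only [map_add, map_smul, LinearMap.add_apply, LinearMap.smul_apply]
    module
  have hVV : tp (V f) (V g) ∈ C := hW f g ▸ hCW _ hfg
  rw [hexpand, C.add_mem_iff_left (C.smul_mem _ hVV), C.add_mem_iff_right (C.smul_mem _ hfg),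
    C.smul_mem_iff (by simp [ha, hb])] at hlim
  exact hlim

end TensorSquare

theorem stmt7_general {H K : Type*}
    [NormedAddCommGroup H] [InnerProductSpace ℂ H]
    [NormedAddCommGroup K] [InnerProductSpace ℂ K] [CompleteSpace K]
    (V : H ≃ₗᵢ[ℂ] H) (h : H)
    -- `h` is a cyclic vector for `V` (simple spectrum)
    (hcyc : cyclicSubspace V h = ⊤)
    -- `aI + bV` belongs to the weak closure of the powers of `V`
    (a b : ℂ) (ha : a ≠ 0) (hb : b ≠ 0) (n : ℕ → ℤ)
    (hwcp : ∀ f g : H, Tendsto (fun k => (inner ℂ ((V ^ n k) f) g : ℂ)) atTop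
      (𝓝 (a * (inner ℂ f g : ℂ) + b * (inner ℂ (V f) g : ℂ))))
    -- abstract tensor square `K ≅ H ⊗ H`
    (tp : H →ₗ[ℂ] H →ₗ[ℂ] K)
    (hinner : ∀ a' b' c' d' : H,
      (inner ℂ (tp a' b') (tp c' d') : ℂ) = (inner ℂ a' c' : ℂ) * (inner ℂ b' d' : ℂ))
    (hdense : (Submodule.span ℂ {x : K | ∃ a' b' : H, x = tp a' b'}).topologicalClosure = ⊤)
    -- `W = V ⊗ V`
    (W : K ≃ₗᵢ[ℂ] K) (hW : ∀ a' b' : H, W (tp a' b') = tp (V a') (V b')) :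
    (∀ C : Submodule ℂ K, IsClosed (C : Set K) →
      (∀ x ∈ C, W x ∈ C) → (∀ x ∈ C, W.symm x ∈ C) →
      tp h h ∈ C → tp h (V h) ∈ C → C = ⊤) ∧
    ∃ f₁ f₂ : K, (cyclicSubspace W f₁ ⊔ cyclicSubspace W f₂).topologicalClosure = ⊤ := by
  have hmain : ∀ C : Submodule ℂ K, IsClosed (C : Set K) →
      (∀ x ∈ C, W x ∈ C) → (∀ x ∈ C, W.symm x ∈ C) →
      tp h h ∈ C → tp h (V h) ∈ C → C = ⊤ := by
    intro C hC hCW hCW' h₀ h₁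
    have hpairs := tp_zpow_zpow_mem hW hCW hCW'
      (tp_add_tp_mem hinner hdense hW hC hCW hCW' ha hb hwcp) h₀ h₁
    refine eq_top_of_tp_mem tp hdense hC (tp_mem_of_dense_span tp hinner hC hcyc ?_)
    rintro _ ⟨i, rfl⟩ _ ⟨j, rfl⟩
    exact hpairs i j
  refine ⟨hmain, tp h h, tp h (V h), hmain _ (Submodule.isClosed_topologicalClosure _)
    (fun x hx => ?_) (fun x hx => ?_) ?_ ?_⟩
  · simpa using zpow_apply_mem_closure_sup_cyclicSubspace W _ _ 1 hx
  · simpa using zpow_apply_mem_closure_sup_cyclicSubspace W _ _ (-1) hx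
  · exact Submodule.le_topologicalClosure _
      (Submodule.mem_sup_left (mem_cyclicSubspace_self W _))
  · exact Submodule.le_topologicalClosure _
      (Submodule.mem_sup_right (mem_cyclicSubspace_self W _))

theorem stmt7 {H K : Type*}
    [NormedAddCommGroup H] [InnerProductSpace ℂ H] [CompleteSpace H]
    [NormedAddCommGroup K] [InnerProductSpace ℂ K] [CompleteSpace K]
    (V : H ≃ₗᵢ[ℂ] H) (h : H)
    -- `h` is a cyclic vector for `V` (simple spectrum)
    (hcyc : cyclicSubspace V h = ⊤)
    -- continuous spectrum: `V` has no eigenvectors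
    (hcont : ∀ (c : ℂ) (f : H), V f = c • f → f = 0)
    -- `aI + bV` belongs to the weak closure of the powers of `V`
    (a b : ℂ) (ha : a ≠ 0) (hb : b ≠ 0) (n : ℕ → ℤ)
    (hwcp : ∀ f g : H, Tendsto (fun k => (inner ℂ ((V ^ n k) f) g : ℂ)) atTop
      (𝓝 (a * (inner ℂ f g : ℂ) + b * (inner ℂ (V f) g : ℂ))))
    -- abstract tensor square `K ≅ H ⊗ H`
    (tp : H →ₗ[ℂ] H →ₗ[ℂ] K)
    (hinner : ∀ a' b' c' d' : H,
      (inner ℂ (tp a' b') (tp c' d') : ℂ) = (inner ℂ a' c' : ℂ) * (inner ℂ b' d' : ℂ))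
    (hdense : (Submodule.span ℂ {x : K | ∃ a' b' : H, x = tp a' b'}).topologicalClosure = ⊤)
    -- `W = V ⊗ V`
    (W : K ≃ₗᵢ[ℂ] K) (hW : ∀ a' b' : H, W (tp a' b') = tp (V a') (V b')) :
    (∀ C : Submodule ℂ K, IsClosed (C : Set K) →
      (∀ x ∈ C, W x ∈ C) → (∀ x ∈ C, W.symm x ∈ C) →
      tp h h ∈ C → tp h (V h) ∈ C → C = ⊤) ∧
    ∃ f₁ f₂ : K, (cyclicSubspace W f₁ ⊔ cyclicSubspace W f₂).topologicalClosure = ⊤ :=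
  stmt7_general V h hcyc a b ha hb n hwcp tp hinner hdense W hW
end

section
/- Let σ be a continuous symmetric-under-flip measure situation: if σ is a continuous probability measure on the circle 𝕋, then for the convolution square σ*², in the disintegration of σ×σ over the multiplication map (z₁,z₂) ↦ z₁z₂, almost every fiber measure σ_z is invariant under the flip (z₁,z₂) ↦ (z₂,z₁), and hence if σ_z is not continuous then its number of atoms is even. -/
/-!
A kernel `κ` disintegrating `σ × σ` over `m` is an a.e.-unique conditional distribution of the
identity given `m`. The flip preserves `σ × σ` and commutes with `m`, so `κ` followed by the flip
is again such a conditional distribution and hence agrees with `κ` almost everywhere. The atoms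
of a flip-invariant `σ_z` then come in pairs `{p, flip p}`, with `p ≠ flip p` because the diagonal
is `σ × σ`-null, hence `σ_z`-null for almost every `z`.
-/

open MeasureTheory ProbabilityTheory

lemma Set.Finite.even_ncard_of_involutive {α : Type*} {S : Set α} (hS : S.Finite) {f : α → α}
    (hf : Function.Involutive f) (hmaps : Set.MapsTo f S S) (hfix : ∀ a ∈ S, f a ≠ a) :
    Even S.ncard := by
  classical
  have := hS.fintype
  let τ : Equiv.Perm S := Function.Involutive.toPerm (hmaps.restrict f S S)
    fun a => Subtype.ext (hf a)
  have hτ : τ.support = Finset.univ :=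
    Finset.eq_univ_of_forall fun a => Equiv.Perm.mem_support.2 fun h =>
      hfix a a.2 (congrArg Subtype.val h)
  have := Equiv.Perm.two_dvd_card_support (σ := τ) (Equiv.ext fun a => Subtype.ext (hf a))
  rw [hτ, Finset.card_univ, ← Nat.card_eq_fintype_card, Nat.card_coe_set_eq] at this
  exact even_iff_two_dvd.2 this

lemma MeasureTheory.Measure.prod_diagonal_eq_zero {α : Type*} [MeasurableSpace α]
    [MeasurableEq α] (μ ν : Measure α) [SFinite ν] [NullSingletonClass ν] :
    μ.prod ν (Set.diagonal α) = 0 := by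
  rw [Measure.prod_apply measurableSet_diagonal]
  have h (x : α) : Prod.mk x ⁻¹' Set.diagonal α = {x} := by ext; simp [eq_comm]
  simp [h]

namespace ProbabilityTheory

variable {Ω 𝓧 : Type*} {mΩ : MeasurableSpace Ω} {m𝓧 : MeasurableSpace 𝓧}
  {P : Measure Ω} {X : Ω → 𝓧} {κ : Kernel 𝓧 Ω}

lemma hasCondDistrib_id_of_disintegration [IsFiniteMeasure P] [MeasurableSingletonClass 𝓧]
    [IsSFiniteKernel κ] (hX : Measurable X)
    (hdis : ∀ s, MeasurableSet s → P s = ∫⁻ z, κ z s ∂(P.map X))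
    (hfiber : ∀ᵐ z ∂(P.map X), κ z {ω | X ω = z}ᶜ = 0) :
    HasCondDistrib id X κ P := by
  have hgraph : Measurable fun ω => (X ω, ω) := hX.prodMk measurable_id
  refine ⟨hgraph.aemeasurable, ?_⟩
  ext s hs
  rw [Function.id_def, Measure.map_apply hgraph hs, Measure.compProd_apply hs, hdis _ (hgraph hs)]
  refine lintegral_congr_ae ?_
  filter_upwards [hfiber] with z hz
  -- on the fiber `X ω = z` the graph point `(X ω, ω)` is `(z, ω)`
  rw [← measure_inter_conull hz, ← measure_inter_conull (s := Prod.mk z ⁻¹' s) hz]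
  congr 1
  ext ω
  simp +contextual [and_congr_left_iff]

lemma HasCondDistrib.ae_map_eq_of_measurePreserving [IsFiniteMeasure P] [IsFiniteKernel κ]
    [MeasurableSpace.CountableOrCountablyGenerated 𝓧 Ω]
    (h : HasCondDistrib id X κ P) {g : Ω → Ω} (hg : MeasurePreserving g P P)
    (hXg : ∀ ω, X (g ω) = X ω) :
    ∀ᵐ z ∂(P.map X), (κ z).map g = κ z := by
  have hmap : HasCondDistrib g X (κ.map g) P := h.comp_left hg.measurable
  have hcomp : HasCondDistrib g X κ P := by
    simpa only [HasCondDistrib, Function.comp_def, hXg, id] using h.comp hg.hasLaw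
  filter_upwards [Kernel.ae_eq_of_compProd_eq (hmap.map_eq.symm.trans hcomp.map_eq)] with z hz
  rwa [← Kernel.map_apply _ hg.measurable]

end ProbabilityTheory

theorem stmt8 (σ : Measure Circle) [IsProbabilityMeasure σ]
    (hcont : ∀ z : Circle, σ {z} = 0)
    (κ : Kernel Circle (Circle × Circle)) [IsMarkovKernel κ]
    -- `κ` disintegrates `σ × σ` over the convolution square `(σ×σ).map m`:
    (hdis : ∀ s : Set (Circle × Circle), MeasurableSet s →
      (σ.prod σ) s = ∫⁻ z, κ z s ∂((σ.prod σ).map (fun p : Circle × Circle => p.1 * p.2)))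
    -- almost every fiber measure is concentrated on the corresponding fiber of `m`:
    (hfiber : ∀ᵐ z ∂((σ.prod σ).map (fun p : Circle × Circle => p.1 * p.2)),
      κ z {p : Circle × Circle | p.1 * p.2 = z}ᶜ = 0) :
    ∀ᵐ z ∂((σ.prod σ).map (fun p : Circle × Circle => p.1 * p.2)),
      (κ z).map (fun p : Circle × Circle => (p.2, p.1)) = κ z ∧
      (∀ hfin : {p : Circle × Circle | κ z {p} ≠ 0}.Finite,
        Even {p : Circle × Circle | κ z {p} ≠ 0}.ncard) := by
  have : NullSingletonClass σ := ⟨hcont⟩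
  have hκ := hasCondDistrib_id_of_disintegration (by fun_prop) hdis hfiber
  have hflip := hκ.ae_map_eq_of_measurePreserving Measure.measurePreserving_swap
    fun p => mul_comm p.2 p.1
  have hdiag : ∀ᵐ z ∂((σ.prod σ).map (fun p : Circle × Circle => p.1 * p.2)),
      κ z (Set.diagonal Circle) = 0 := by
    have hnull := Measure.prod_diagonal_eq_zero σ σ
    rwa [hdis _ measurableSet_diagonal,
      lintegral_eq_zero_iff (κ.measurable_coe measurableSet_diagonal)] at hnull
  filter_upwards [hflip, hdiag] with z hz_flip hz_diag
  refine ⟨hz_flip, fun hfin => hfin.even_ncard_of_involutive Prod.swap_swap ?_ ?_⟩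
  · intro p (hp : κ z {p} ≠ 0)
    have hpre : Prod.swap ⁻¹' {p.swap} = {p} := by ext; simp [Prod.swap_eq_iff_eq_swap]
    show κ z {p.swap} ≠ 0
    rwa [← hz_flip, Measure.map_apply measurable_swap (measurableSet_singleton _), hpre]
  · intro p (hp : κ z {p} ≠ 0) hswap
    have hp_diag : p ∈ Set.diagonal Circle := congrArg Prod.snd hswap
    exact hp (measure_mono_null (Set.singleton_subset_iff.2 hp_diag) hz_diag)
end
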